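/- Let k ≥ 1 be an integer and consider the 3k points u_i, v_i, w_i for i = 1,…,k of the nested-triangle drawing. Then the 3k x-coordinates are pairwise distinct and form exactly the set {1, 2, …, 3k}, and the 3k y-coordinates are pairwise distinct and all lie between 1 and 4k−1. In particular the drawing is non-aligned and fits in an n × (4n/3 − 1) grid, where n = 3k. -/
import Mathlib


/-- The points of the nested-triangle drawing, with integer coordinates:
`ntPt k 0 i = uᵢ = (i, i)`, `ntPt k 1 i = vᵢ = (3k+1−i, k+i)`,
`ntPt k 2 i = wᵢ = (k+i, 4k+1−2i)`. -/
def ntPt (k : ℕ) (j : Fin 3) (i : ℕ) : ℤ × ℤ :=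
  if j = 0 then ((i : ℤ), (i : ℤ))
  else if j = 1 then ((3 * k + 1 - i : ℤ), (k + i : ℤ))
  else ((k + i : ℤ), (4 * k + 1 - 2 * i : ℤ))

/-- In the nested-triangle drawing with `k ≥ 1`: the `3k` x-coordinates are
pairwise distinct and form exactly the set `{1, …, 3k}`, and the `3k`
y-coordinates are pairwise distinct and all lie between `1` and `4k − 1`. -/
theorem nested_triangle_non_aligned (k : ℕ) (hk : 1 ≤ k) :
    (∀ (j j' : Fin 3) (i i' : ℕ), 1 ≤ i → i ≤ k → 1 ≤ i' → i' ≤ k →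
        (ntPt k j i).1 = (ntPt k j' i').1 → j = j' ∧ i = i') ∧
    ({q : ℤ | ∃ (j : Fin 3) (i : ℕ), 1 ≤ i ∧ i ≤ k ∧ (ntPt k j i).1 = q}
        = Set.Icc (1 : ℤ) (3 * k)) ∧
    (∀ (j j' : Fin 3) (i i' : ℕ), 1 ≤ i → i ≤ k → 1 ≤ i' → i' ≤ k →
        (ntPt k j i).2 = (ntPt k j' i').2 → j = j' ∧ i = i') ∧
    (∀ (j : Fin 3) (i : ℕ), 1 ≤ i → i ≤ k →
        1 ≤ (ntPt k j i).2 ∧ (ntPt k j i).2 ≤ 4 * k - 1) := by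
  refine ⟨?_, ?_, ?_, ?_⟩
  · intro j j' i i' h1 h2 h3 h4 hx
    fin_cases j <;> fin_cases j' <;> simp_all [ntPt] <;> omega
  · ext q
    simp only [Set.mem_setOf_eq, Set.mem_Icc]
    constructor
    · rintro ⟨j, i, h1, h2, rfl⟩
      fin_cases j <;> simp [ntPt] <;> omega
    · rintro ⟨hq1, hq2⟩
      by_cases hc1 : q ≤ k
      · exact ⟨0, q.toNat, by simp [ntPt]; omega⟩
      · by_cases hc2 : q ≤ 2 * k
        · exact ⟨2, (q - k).toNat, by simp [ntPt]; omega⟩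
        · exact ⟨1, (3 * k + 1 - q).toNat, by simp [ntPt]; omega⟩
  · intro j j' i i' h1 h2 h3 h4 hy
    fin_cases j <;> fin_cases j' <;> simp_all [ntPt] <;> omega
  · intro j i h1 h2
    fin_cases j <;> simp [ntPt] <;> omega
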